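/- In the scale family of random effects, if E[v⁴] ≠ 3 (the standardized random effect has nonzero excess kurtosis), then for any two distinct values A₁ ≠ A₂ in (0, ∞) the law of H_{A₁} differs from the law of H_{A₂}; hence the standardized prediction error H(β, A) = (θ − θ̃)/√g₁ is not a pivot. -/

import Mathlib

open MeasureTheory ProbabilityTheory
open scoped NNReal

section AuxGaussMoments
open Real
open scoped ENNReal


lemma auxInt {b : ℝ} (hb : 0 < b) (n : ℕ) :
    Integrable (fun x : ℝ => x ^ n * Real.exp (-b * x ^ 2)) := by
  have hs : (-1 : ℝ) < (n : ℝ) := neg_one_lt_zero.trans_le (Nat.cast_nonneg n)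
  have := integrable_rpow_mul_exp_neg_mul_sq hb hs
  simpa [Real.rpow_natCast] using this

lemma auxRec {b : ℝ} (hb : 0 < b) (n : ℕ) :
    (2 * b) * ∫ x : ℝ, x ^ (n + 2) * Real.exp (-b * x ^ 2) =
      ((n : ℝ) + 1) * ∫ x : ℝ, x ^ n * Real.exp (-b * x ^ 2) := by
  set f : ℝ → ℝ := fun x => x ^ (n + 1) * Real.exp (-b * x ^ 2) with hf
  set g : ℝ → ℝ := fun x =>
    ((n : ℝ) + 1) * (x ^ n * Real.exp (-b * x ^ 2))
      - (2 * b) * (x ^ (n + 2) * Real.exp (-b * x ^ 2)) with hg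
  have hderiv : ∀ x : ℝ, HasDerivAt f (g x) x := by
    intro x
    have h1 : HasDerivAt (fun y : ℝ => y ^ (n + 1)) (((n : ℝ) + 1) * x ^ n) x := by
      simpa using hasDerivAt_pow (n + 1) x
    have h2 : HasDerivAt (fun y : ℝ => Real.exp (-b * y ^ 2))
        (Real.exp (-b * x ^ 2) * (-b * (2 * x))) x := by
      have h3 : HasDerivAt (fun y : ℝ => -b * y ^ 2) (-b * (2 * x)) x := by
        simpa using (hasDerivAt_pow 2 x).const_mul (-b)
      exact h3.exp
    have h4 := h1.mul h2
    refine h4.congr_deriv ?_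
    simp only [hg]
    ring
  have h0 := integral_eq_zero_of_hasDerivAt_of_integrable hderiv
    (((auxInt hb n).const_mul _).sub ((auxInt hb (n + 2)).const_mul _)) (auxInt hb (n + 1))
  rw [hg] at h0
  rw [integral_sub ((auxInt hb n).const_mul _) ((auxInt hb (n + 2)).const_mul _),
      integral_const_mul, integral_const_mul] at h0
  linarith

lemma auxOdd {b : ℝ} {n : ℕ} (hn : Odd n) :
    ∫ x : ℝ, x ^ n * Real.exp (-b * x ^ 2) = 0 := by
  have h : ∫ x : ℝ, ((-x) ^ n * Real.exp (-b * (-x) ^ 2)) =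
      ∫ x : ℝ, x ^ n * Real.exp (-b * x ^ 2) :=
    integral_neg_eq_self (fun x : ℝ => x ^ n * Real.exp (-b * x ^ 2)) volume
  simp only [hn.neg_pow, neg_sq, neg_mul] at h
  rw [integral_neg] at h
  simp_rw [← neg_mul] at h
  linarith

lemma auxM2 {b : ℝ} (hb : 0 < b) :
    ∫ x : ℝ, x ^ 2 * Real.exp (-b * x ^ 2) = Real.sqrt (π / b) / (2 * b) := by
  have h := auxRec hb 0
  simp only [pow_zero, one_mul, Nat.cast_zero, zero_add] at h
  rw [integral_gaussian] at h
  have h2b : (2 : ℝ) * b ≠ 0 := by positivity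
  rw [eq_div_iff h2b]
  linarith

lemma auxM4 {b : ℝ} (hb : 0 < b) :
    ∫ x : ℝ, x ^ 4 * Real.exp (-b * x ^ 2) = 3 * Real.sqrt (π / b) / (2 * b) ^ 2 := by
  have h := auxRec hb 2
  rw [auxM2 hb] at h
  norm_num at h
  simp_rw [← neg_mul] at h
  rw [← mul_div_assoc, eq_div_iff (by positivity : (2 : ℝ) * b ≠ 0)] at h
  rw [eq_div_iff (by positivity : ((2 : ℝ) * b) ^ 2 ≠ 0)]
  linear_combination h

lemma gaussianPDFReal_eq' (D : ℝ≥0) (x : ℝ) :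
    gaussianPDFReal 0 D x =
      (Real.sqrt (2 * π * D))⁻¹ * Real.exp (-(2 * (D : ℝ))⁻¹ * x ^ 2) := by
  rw [gaussianPDFReal]
  congr 1
  ring

lemma integral_fun_gaussianReal (D : ℝ≥0) (hD : D ≠ 0) (g : ℝ → ℝ) :
    ∫ x, g x ∂(gaussianReal 0 D) = ∫ x, gaussianPDFReal 0 D x * g x := by
  rw [gaussianReal_of_var_ne_zero 0 hD]
  have hmeq : gaussianPDF 0 D = fun x => ((gaussianPDFReal 0 D x).toNNReal : ℝ≥0∞) := rfl
  rw [hmeq,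
    integral_withDensity_eq_integral_smul ((measurable_gaussianPDFReal 0 D).real_toNNReal) g]
  congr 1
  funext x
  rw [NNReal.smul_def, smul_eq_mul, Real.coe_toNNReal _ (gaussianPDFReal_nonneg 0 D x)]

lemma integrable_fun_gaussianReal (D : ℝ≥0) (hD : D ≠ 0) (g : ℝ → ℝ) :
    Integrable g (gaussianReal 0 D) ↔ Integrable (fun x => gaussianPDFReal 0 D x * g x) := by
  rw [gaussianReal_of_var_ne_zero 0 hD]
  have hmeq : gaussianPDF 0 D = fun x => ((gaussianPDFReal 0 D x).toNNReal : ℝ≥0∞) := rfl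
  rw [hmeq,
    integrable_withDensity_iff_integrable_smul ((measurable_gaussianPDFReal 0 D).real_toNNReal)]
  refine integrable_congr (Filter.Eventually.of_forall fun x => ?_)
  simp only [NNReal.smul_def, smul_eq_mul, Real.coe_toNNReal _ (gaussianPDFReal_nonneg 0 D x)]

lemma pdf_mul_pow_eq (D : ℝ≥0) (n : ℕ) :
    (fun x : ℝ => gaussianPDFReal 0 D x * x ^ n)
      = fun x : ℝ =>
        (Real.sqrt (2 * π * D))⁻¹ * (x ^ n * Real.exp (-(2 * (D : ℝ))⁻¹ * x ^ 2)) := by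
  funext x
  rw [gaussianPDFReal_eq']
  ring

lemma integrable_pow_gaussianReal (D : ℝ≥0) (hD : D ≠ 0) (n : ℕ) :
    Integrable (fun x : ℝ => x ^ n) (gaussianReal 0 D) := by
  have hD' : (0 : ℝ) < D := by positivity
  rw [integrable_fun_gaussianReal D hD, pdf_mul_pow_eq]
  exact (auxInt (by positivity) n).const_mul _

lemma integral_pow_gaussianReal (D : ℝ≥0) (hD : D ≠ 0) (n : ℕ) :
    ∫ x, x ^ n ∂(gaussianReal 0 D) =
      (Real.sqrt (2 * π * D))⁻¹ * ∫ x, x ^ n * Real.exp (-(2 * (D : ℝ))⁻¹ * x ^ 2) := by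
  rw [integral_fun_gaussianReal D hD, pdf_mul_pow_eq, integral_const_mul]

lemma gauss_sqrt_eq (D : ℝ≥0) (hD' : (0 : ℝ) < D) :
    Real.sqrt (π / (2 * (D : ℝ))⁻¹) = Real.sqrt (2 * π * D) := by
  rw [show π / (2 * (D : ℝ))⁻¹ = 2 * π * (D : ℝ) by field_simp]

lemma gauss_m1 (D : ℝ≥0) (hD : D ≠ 0) : ∫ x, x ^ 1 ∂(gaussianReal 0 D) = 0 := by
  rw [integral_pow_gaussianReal D hD, auxOdd (by decide : Odd 1), mul_zero]

lemma gauss_m3 (D : ℝ≥0) (hD : D ≠ 0) : ∫ x, x ^ 3 ∂(gaussianReal 0 D) = 0 := by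
  rw [integral_pow_gaussianReal D hD, auxOdd (by decide : Odd 3), mul_zero]

lemma gauss_m2 (D : ℝ≥0) (hD : D ≠ 0) : ∫ x, x ^ 2 ∂(gaussianReal 0 D) = (D : ℝ) := by
  have hD' : (0 : ℝ) < D := by positivity
  rw [integral_pow_gaussianReal D hD, auxM2 (by positivity), gauss_sqrt_eq D hD']
  have h1 : Real.sqrt (2 * π * (D : ℝ)) ≠ 0 := by positivity
  field_simp

lemma gauss_m4 (D : ℝ≥0) (hD : D ≠ 0) :
    ∫ x, x ^ 4 ∂(gaussianReal 0 D) = 3 * (D : ℝ) ^ 2 := by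
  have hD' : (0 : ℝ) < D := by positivity
  rw [integral_pow_gaussianReal D hD, auxM4 (by positivity), gauss_sqrt_eq D hD']
  have h1 : Real.sqrt (2 * π * (D : ℝ)) ≠ 0 := by positivity
  field_simp


section AuxProb

variable {Ω : Type*} [MeasureSpace Ω] [IsProbabilityMeasure (ℙ : Measure Ω)]

lemma comb_moment (v e : Ω → ℝ) (D : ℝ≥0) (hD : D ≠ 0)
    (hv_meas : Measurable v) (he_meas : Measurable e)
    (hv4_int : Integrable (fun ω => (v ω) ^ 4))
    (he_law : Measure.map e ℙ = gaussianReal 0 D)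
    (h_indep : IndepFun v e) (a c : ℝ) :
    ∫ ω, (a * v ω - c * e ω) ^ 4 =
      a ^ 4 * (∫ ω, (v ω) ^ 4) + 6 * a ^ 2 * c ^ 2 * (∫ ω, (v ω) ^ 2) * (D : ℝ)
        + 3 * c ^ 4 * (D : ℝ) ^ 2 := by
  have hpm : ∀ n : ℕ, Measurable fun x : ℝ => x ^ n := fun n => by fun_prop
  have hvk : ∀ k : ℕ, k ≤ 4 → Integrable (fun ω => v ω ^ k) ℙ := by
    intro k hk
    have hg : Integrable (fun ω => 1 + v ω ^ 4) ℙ := (integrable_const 1).add hv4_int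
    refine hg.mono' ((hv_meas.pow_const k).aestronglyMeasurable)
      (Filter.Eventually.of_forall fun ω => ?_)
    rw [Real.norm_eq_abs, abs_pow]
    have habs : |v ω| ^ 4 = v ω ^ 4 := by
      rw [← abs_pow]
      exact abs_of_nonneg (by positivity)
    rcases le_total (|v ω|) 1 with h | h
    · have h1 : |v ω| ^ k ≤ 1 := pow_le_one₀ (abs_nonneg _) h
      have h2 : (0 : ℝ) ≤ v ω ^ 4 := by positivity
      linarith
    · have h1 : |v ω| ^ k ≤ |v ω| ^ 4 := pow_le_pow_right₀ h hk
      linarith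
  have hie : ∀ n : ℕ, Integrable (fun ω => e ω ^ n) ℙ := by
    intro n
    have h1 : Integrable (fun x : ℝ => x ^ n) (Measure.map e ℙ) := by
      rw [he_law]; exact integrable_pow_gaussianReal D hD n
    rw [integrable_map_measure ((hpm n).aestronglyMeasurable)
      he_meas.aemeasurable] at h1
    exact h1
  have me_val : ∀ n : ℕ, (∫ ω, e ω ^ n) = ∫ x, x ^ n ∂(gaussianReal 0 D) := by
    intro n
    rw [← he_law,
      integral_map he_meas.aemeasurable ((hpm n).aestronglyMeasurable)]
  have hind : ∀ k m : ℕ, IndepFun (fun ω => v ω ^ k) (fun ω => e ω ^ m) ℙ :=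
    fun k m => h_indep.comp (hpm k) (hpm m)
  have hprod_int : ∀ k m : ℕ, k ≤ 4 → Integrable (fun ω => v ω ^ k * e ω ^ m) ℙ :=
    fun k m hk => (hind k m).integrable_mul (hvk k hk) (hie m)
  have hprod : ∀ k m : ℕ, (∫ ω, v ω ^ k * e ω ^ m) = (∫ ω, v ω ^ k) * ∫ ω, e ω ^ m :=
    fun k m => (hind k m).integral_mul_eq_mul_integral ((hv_meas.pow_const k).aestronglyMeasurable)
      ((he_meas.pow_const m).aestronglyMeasurable)
  have hexp : (fun ω => (a * v ω - c * e ω) ^ 4) = fun ω =>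
      a ^ 4 * (v ω ^ 4 * e ω ^ 0) + (-(4 * a ^ 3 * c)) * (v ω ^ 3 * e ω ^ 1)
        + (6 * a ^ 2 * c ^ 2) * (v ω ^ 2 * e ω ^ 2)
        + (-(4 * a * c ^ 3)) * (v ω ^ 1 * e ω ^ 3)
        + c ^ 4 * (v ω ^ 0 * e ω ^ 4) := by
    funext ω; ring
  have i1 := (hprod_int 4 0 (by norm_num)).const_mul (a ^ 4)
  have i2 := (hprod_int 3 1 (by norm_num)).const_mul (-(4 * a ^ 3 * c))
  have i3 := (hprod_int 2 2 (by norm_num)).const_mul (6 * a ^ 2 * c ^ 2)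
  have i4 := (hprod_int 1 3 (by norm_num)).const_mul (-(4 * a * c ^ 3))
  have i5 := (hprod_int 0 4 (by norm_num)).const_mul (c ^ 4)
  have h2 : (∫ ω, (a ^ 4 * (v ω ^ 4 * e ω ^ 0)) + -(4 * a ^ 3 * c) * (v ω ^ 3 * e ω ^ 1)) = (∫ ω, a ^ 4 * (v ω ^ 4 * e ω ^ 0)) + ∫ ω, -(4 * a ^ 3 * c) * (v ω ^ 3 * e ω ^ 1) := integral_add (i1) i2
  have j3 : Integrable (fun ω => a ^ 4 * (v ω ^ 4 * e ω ^ 0) + -(4 * a ^ 3 * c) * (v ω ^ 3 * e ω ^ 1)) ℙ := (i1).add i2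
  have h3 : (∫ ω, (a ^ 4 * (v ω ^ 4 * e ω ^ 0) + -(4 * a ^ 3 * c) * (v ω ^ 3 * e ω ^ 1)) + 6 * a ^ 2 * c ^ 2 * (v ω ^ 2 * e ω ^ 2)) = (∫ ω, a ^ 4 * (v ω ^ 4 * e ω ^ 0) + -(4 * a ^ 3 * c) * (v ω ^ 3 * e ω ^ 1)) + ∫ ω, 6 * a ^ 2 * c ^ 2 * (v ω ^ 2 * e ω ^ 2) := integral_add ((i1).add i2) i3
  have j4 : Integrable (fun ω => a ^ 4 * (v ω ^ 4 * e ω ^ 0) + -(4 * a ^ 3 * c) * (v ω ^ 3 * e ω ^ 1) + 6 * a ^ 2 * c ^ 2 * (v ω ^ 2 * e ω ^ 2)) ℙ := j3.add i3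
  have h4 : (∫ ω, (a ^ 4 * (v ω ^ 4 * e ω ^ 0) + -(4 * a ^ 3 * c) * (v ω ^ 3 * e ω ^ 1) + 6 * a ^ 2 * c ^ 2 * (v ω ^ 2 * e ω ^ 2)) + -(4 * a * c ^ 3) * (v ω ^ 1 * e ω ^ 3)) = (∫ ω, a ^ 4 * (v ω ^ 4 * e ω ^ 0) + -(4 * a ^ 3 * c) * (v ω ^ 3 * e ω ^ 1) + 6 * a ^ 2 * c ^ 2 * (v ω ^ 2 * e ω ^ 2)) + ∫ ω, -(4 * a * c ^ 3) * (v ω ^ 1 * e ω ^ 3) := integral_add (j3.add i3) i4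
  have j5 : Integrable (fun ω => a ^ 4 * (v ω ^ 4 * e ω ^ 0) + -(4 * a ^ 3 * c) * (v ω ^ 3 * e ω ^ 1) + 6 * a ^ 2 * c ^ 2 * (v ω ^ 2 * e ω ^ 2) + -(4 * a * c ^ 3) * (v ω ^ 1 * e ω ^ 3)) ℙ := j4.add i4
  have h5 : (∫ ω, (a ^ 4 * (v ω ^ 4 * e ω ^ 0) + -(4 * a ^ 3 * c) * (v ω ^ 3 * e ω ^ 1) + 6 * a ^ 2 * c ^ 2 * (v ω ^ 2 * e ω ^ 2) + -(4 * a * c ^ 3) * (v ω ^ 1 * e ω ^ 3)) + c ^ 4 * (v ω ^ 0 * e ω ^ 4)) = (∫ ω, a ^ 4 * (v ω ^ 4 * e ω ^ 0) + -(4 * a ^ 3 * c) * (v ω ^ 3 * e ω ^ 1) + 6 * a ^ 2 * c ^ 2 * (v ω ^ 2 * e ω ^ 2) + -(4 * a * c ^ 3) * (v ω ^ 1 * e ω ^ 3)) + ∫ ω, c ^ 4 * (v ω ^ 0 * e ω ^ 4) := integral_add (j4.add i4) i5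
  rw [hexp, h5, h4, h3, h2,
    integral_const_mul, integral_const_mul, integral_const_mul, integral_const_mul,
    integral_const_mul, hprod 4 0, hprod 3 1, hprod 2 2, hprod 1 3, hprod 0 4,
    me_val 0, me_val 1, me_val 2, me_val 3, me_val 4, gauss_m1 D hD, gauss_m2 D hD,
    gauss_m3 D hD, gauss_m4 D hD]
  have h0 : (∫ x : ℝ, x ^ 0 ∂(gaussianReal 0 D)) = 1 := by simp
  have hv0 : (∫ ω, v ω ^ 0 ∂(ℙ : Measure Ω)) = 1 := by simp
  rw [h0, hv0]
  ring

end AuxProb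
end AuxGaussMoments

/-- In the scale family of random effects, if `E[v⁴] ≠ 3` then for any two distinct
`A₁ ≠ A₂` in `(0, ∞)` the law of `H_{A₁}` differs from the law of `H_{A₂}`; hence the
standardized prediction error is not a pivot. -/
theorem standardized_prediction_error_not_pivot
    {Ω : Type*} [MeasureSpace Ω] [IsProbabilityMeasure (ℙ : Measure Ω)]
    (v e : Ω → ℝ) (D : ℝ≥0) (hD : 0 < D)
    (hv_meas : Measurable v) (he_meas : Measurable e)
    (hv_symm : Measure.map v ℙ = Measure.map (fun ω => -v ω) ℙ)
    (hv_var : (∫ ω, (v ω) ^ 2) = 1)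
    (hv4_int : Integrable (fun ω => (v ω) ^ 4))
    (hv4_ne : (∫ ω, (v ω) ^ 4) ≠ 3)
    (he_law : Measure.map e ℙ = gaussianReal 0 D)
    (h_indep : IndepFun v e)
    (H : ℝ → Ω → ℝ)
    (hH : H = fun A ω =>
      ((D : ℝ) / (A + (D : ℝ)) * Real.sqrt A * v ω
          - (1 - (D : ℝ) / (A + (D : ℝ))) * e ω) / Real.sqrt (A * (D : ℝ) / (A + (D : ℝ)))) :
    ∀ A₁ A₂ : ℝ, 0 < A₁ → 0 < A₂ → A₁ ≠ A₂ →
      Measure.map (H A₁) ℙ ≠ Measure.map (H A₂) ℙ := by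
  intro A₁ A₂ hA₁ hA₂ hne heq
  have hD' : (0 : ℝ) < (D : ℝ) := by exact_mod_cast hD
  have hDne : (D : ℝ) ≠ 0 := ne_of_gt hD'
  have hDne' : D ≠ 0 := fun h => hDne (by simp [h])
  have hmeas : ∀ A : ℝ, Measurable (H A) := by
    intro A
    rw [hH]
    exact ((hv_meas.const_mul _).sub (he_meas.const_mul _)).div_const _
  have hform : ∀ A : ℝ, 0 < A → ∀ ω, H A ω =
      Real.sqrt ((D : ℝ) / (A + (D : ℝ))) * v ω
        - Real.sqrt ((1 - (D : ℝ) / (A + (D : ℝ))) / (D : ℝ)) * e ω := by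
    intro A hA ω
    have hAD : (0 : ℝ) < A + (D : ℝ) := by positivity
    simp only [hH]
    set s : ℝ := (D : ℝ) / (A + (D : ℝ)) with hs
    have hs0 : 0 < s := by positivity
    have hs1 : s ≤ 1 := by rw [hs, div_le_one hAD]; linarith
    have hAs : A * s = (1 - s) * (D : ℝ) := by rw [hs]; field_simp; ring
    rw [show A * (D : ℝ) / (A + (D : ℝ)) = A * s by rw [hs]; ring,
      Real.sqrt_mul hA.le]
    have hssne : Real.sqrt A * Real.sqrt s ≠ 0 := by positivity
    rw [div_eq_iff hssne]
    have hms : Real.sqrt s * Real.sqrt s = s := Real.mul_self_sqrt hs0.le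
    have k1 : Real.sqrt A * Real.sqrt s = Real.sqrt ((1 - s) * (D : ℝ)) := by
      rw [← Real.sqrt_mul hA.le, hAs]
    have k2 : Real.sqrt ((1 - s) / (D : ℝ)) * Real.sqrt ((1 - s) * (D : ℝ)) = 1 - s := by
      rw [← Real.sqrt_mul (div_nonneg (by linarith) hD'.le),
        show (1 - s) / (D : ℝ) * ((1 - s) * (D : ℝ)) = (1 - s) ^ 2 by field_simp]
      exact Real.sqrt_sq (by linarith)
    have h2 : (1 : ℝ) - s = Real.sqrt ((1 - s) / (D : ℝ)) * (Real.sqrt A * Real.sqrt s) := by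
      rw [k1]; exact k2.symm
    linear_combination (-Real.sqrt A * v ω) * hms - e ω * h2
  have hK := comb_moment v e D hDne' hv_meas he_meas hv4_int he_law h_indep
  have hmom : ∀ A : ℝ, 0 < A →
      (∫ ω, (H A ω) ^ 4) = ((D : ℝ) / (A + (D : ℝ))) ^ 2 * ((∫ ω, (v ω) ^ 4) - 3) + 3 := by
    intro A hA
    have hAD : (0 : ℝ) < A + (D : ℝ) := by positivity
    set s : ℝ := (D : ℝ) / (A + (D : ℝ)) with hs
    have hs0 : 0 < s := by positivity
    have hs1 : s ≤ 1 := by rw [hs, div_le_one hAD]; linarith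
    have hcongr : (∫ ω, (H A ω) ^ 4) =
        ∫ ω, (Real.sqrt s * v ω - Real.sqrt ((1 - s) / (D : ℝ)) * e ω) ^ 4 := by
      congr 1
      funext ω
      rw [hform A hA ω, ← hs]
    rw [hcongr, hK (Real.sqrt s) (Real.sqrt ((1 - s) / (D : ℝ))), hv_var]
    have e1 : Real.sqrt s ^ 2 = s := Real.sq_sqrt hs0.le
    have e2 : Real.sqrt ((1 - s) / (D : ℝ)) ^ 2 = (1 - s) / (D : ℝ) :=
      Real.sq_sqrt (div_nonneg (by linarith) hD'.le)
    have e3 : Real.sqrt s ^ 4 = s ^ 2 := by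
      rw [show Real.sqrt s ^ 4 = (Real.sqrt s ^ 2) ^ 2 by ring, e1]
    have e4 : Real.sqrt ((1 - s) / (D : ℝ)) ^ 4 = ((1 - s) / (D : ℝ)) ^ 2 := by
      rw [show Real.sqrt ((1 - s) / (D : ℝ)) ^ 4
            = (Real.sqrt ((1 - s) / (D : ℝ)) ^ 2) ^ 2 by ring, e2]
    rw [e3, e4, e1, e2]
    field_simp
    ring
  have hp4 : Measurable fun x : ℝ => x ^ 4 := by fun_prop
  have key : ((D : ℝ) / (A₁ + (D : ℝ))) ^ 2 * ((∫ ω, (v ω) ^ 4) - 3) + 3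
      = ((D : ℝ) / (A₂ + (D : ℝ))) ^ 2 * ((∫ ω, (v ω) ^ 4) - 3) + 3 := by
    rw [← hmom A₁ hA₁, ← hmom A₂ hA₂]
    calc (∫ ω, (H A₁ ω) ^ 4) = ∫ x, x ^ 4 ∂(Measure.map (H A₁) ℙ) :=
          (integral_map (hmeas A₁).aemeasurable hp4.aestronglyMeasurable).symm
      _ = ∫ x, x ^ 4 ∂(Measure.map (H A₂) ℙ) := by rw [heq]
      _ = ∫ ω, (H A₂ ω) ^ 4 :=
          integral_map (hmeas A₂).aemeasurable hp4.aestronglyMeasurable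
  have hKne : (∫ ω, (v ω) ^ 4) - 3 ≠ 0 := sub_ne_zero.mpr hv4_ne
  have hsq : ((D : ℝ) / (A₁ + (D : ℝ))) ^ 2 = ((D : ℝ) / (A₂ + (D : ℝ))) ^ 2 :=
    mul_right_cancel₀ hKne (by linarith)
  have hp1 : 0 < (D : ℝ) / (A₁ + (D : ℝ)) := by positivity
  have hp2 : 0 < (D : ℝ) / (A₂ + (D : ℝ)) := by positivity
  have hz : ((D : ℝ) / (A₁ + (D : ℝ)) - (D : ℝ) / (A₂ + (D : ℝ)))
      * ((D : ℝ) / (A₁ + (D : ℝ)) + (D : ℝ) / (A₂ + (D : ℝ))) = 0 := by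
    linear_combination hsq
  have hs12 : (D : ℝ) / (A₁ + (D : ℝ)) = (D : ℝ) / (A₂ + (D : ℝ)) := by
    rcases mul_eq_zero.mp hz with h | h
    · linarith
    · linarith
  apply hne
  rw [div_eq_div_iff (by positivity) (by positivity)] at hs12
  have h12 := mul_left_cancel₀ hDne hs12
  linarith
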